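/- Let r ≥ 1 be an integer, and let u, v, w ∈ ℤ² be distinct with Δ = |v−w| ≤ 2r. Set λ = √(r² − Δ²/4), a = ⟨u−v, u−w⟩ (dot product) and b = ⟨u−v, (v−w)^⊥⟩ where (v−w)^⊥ is the rotation of v−w by 90 degrees. Then the distance from u to the circle of radius r with center (v+w)/2 − λ(v−w)^⊥/Δ equals |a + 2λb/Δ| / (√(a + 2λb/Δ + r²) + r). -/

import Mathlib

/-!
Write `m = (v + w)/2` and `p = (v - w)^⊥`, so `p ⊥ v - w` and `‖p‖ = Δ`. Expanding
`u - O = (u - m) + (λ/Δ) p` gives `|u - O|² = |u - m|² + 2(λ/Δ)⟨u - m, p⟩ + λ²`, where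
`|u - m|² = a + Δ²/4` (median identity) and `⟨u - m, p⟩ = b`; with `λ² = r² - Δ²/4` this is
`|u - O|² = a + 2λb/Δ + r²`. The formula is then `|d - r| = |d² - r²| / (d + r)`.
-/

noncomputable def toPlane (p : ℤ × ℤ) : EuclideanSpace ℝ (Fin 2) :=
  !₂[(p.1 : ℝ), (p.2 : ℝ)]

/-- Rotation of a planar vector by 90 degrees. -/
noncomputable def perp (p : EuclideanSpace ℝ (Fin 2)) : EuclideanSpace ℝ (Fin 2) :=
  !₂[-(p 1), p 0]

open RealInnerProductSpace

lemma toPlane_injective : Function.Injective toPlane := by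
  intro p q h
  have h0 := congrArg (fun q => q 0) h
  have h1 := congrArg (fun q => q 1) h
  simp only [toPlane, PiLp.toLp_apply, Matrix.cons_val_zero, Matrix.cons_val_one,
    Int.cast_inj] at h0 h1
  exact Prod.ext h0 h1

lemma inner_perp_right (p : EuclideanSpace ℝ (Fin 2)) : ⟪p, perp p⟫ = 0 := by
  simp only [perp, PiLp.inner_apply, RCLike.inner_apply, Real.ringHom_apply, Fin.sum_univ_two,
    Matrix.cons_val_zero, Matrix.cons_val_one, Matrix.cons_val_fin_one]
  ring

lemma norm_perp (p : EuclideanSpace ℝ (Fin 2)) : ‖perp p‖ = ‖p‖ := by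
  simp [perp, EuclideanSpace.norm_eq, Fin.sum_univ_two, add_comm]

section
variable {E : Type*} [NormedAddCommGroup E] [InnerProductSpace ℝ E]

lemma norm_sub_half_smul_add_sq (x y z : E) :
    ‖x - (1 / 2 : ℝ) • (y + z)‖ ^ 2 = ⟪x - y, x - z⟫ + ‖y - z‖ ^ 2 / 4 := by
  have : x - (1 / 2 : ℝ) • (y + z) = (1 / 2 : ℝ) • ((x - y) + (x - z)) := by module
  have hyz : y - z = (x - z) - (x - y) := by abel
  rw [this, hyz]
  generalize x - y = a, x - z = c
  rw [norm_smul, mul_pow, norm_add_sq_real, norm_sub_sq_real, real_inner_comm c]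
  norm_num
  ring

lemma norm_sub_half_smul_add_sub_smul_sq (x y z p : E) (t : ℝ) (hp : ⟪y - z, p⟫ = 0) :
    ‖x - ((1 / 2 : ℝ) • (y + z) - t • p)‖ ^ 2
      = ⟪x - y, x - z⟫ + ‖y - z‖ ^ 2 / 4 + 2 * t * ⟪x - y, p⟫ + t ^ 2 * ‖p‖ ^ 2 := by
  have hsplit : x - ((1 / 2 : ℝ) • (y + z) - t • p) = (x - (1 / 2 : ℝ) • (y + z)) + t • p := by
    abel
  have hinner : ⟪x - (1 / 2 : ℝ) • (y + z), p⟫ = ⟪x - y, p⟫ := by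
    have : x - (1 / 2 : ℝ) • (y + z) = (x - y) + (1 / 2 : ℝ) • (y - z) := by module
    rw [this, inner_add_left, real_inner_smul_left, hp, mul_zero, add_zero]
  rw [hsplit, norm_add_sq_real, norm_sub_half_smul_add_sq, real_inner_smul_right, hinner,
    norm_smul, mul_pow, Real.norm_eq_abs, sq_abs]
  ring

end

lemma abs_sub_eq_abs_sq_sub_div {d r : ℝ} (hd : 0 ≤ d) (hr : 0 < r) :
    |d - r| = |d ^ 2 - r ^ 2| / (d + r) := by
  have hpos : 0 < d + r := by positivity
  rw [eq_div_iff hpos.ne', ← abs_of_pos hpos, ← abs_mul]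
  ring_nf

theorem stmt_1_general (r : ℤ) (hr : 1 ≤ r) (u v w : ℤ × ℤ)
    (hvw : v ≠ w)
    (Δ lam a b : ℝ)
    (hΔ : Δ = dist (toPlane v) (toPlane w))
    (hΔ2r : Δ ≤ 2 * r)
    (hlam : lam = Real.sqrt ((r : ℝ) ^ 2 - Δ ^ 2 / 4))
    (ha : a = inner ℝ (toPlane u - toPlane v) (toPlane u - toPlane w))
    (hb : b = inner ℝ (toPlane u - toPlane v) (perp (toPlane v - toPlane w))) :
    |dist (toPlane u)
        ((1 / 2 : ℝ) • (toPlane v + toPlane w) - (lam / Δ) • perp (toPlane v - toPlane w)) - r|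
      = |a + 2 * lam * b / Δ| / (Real.sqrt (a + 2 * lam * b / Δ + (r : ℝ) ^ 2) + r) := by
  have hr0 : (0 : ℝ) < r := by exact_mod_cast hr
  have hΔpos : 0 < Δ := hΔ ▸ dist_pos.mpr (toPlane_injective.ne hvw)
  have hlam_sq : lam ^ 2 = r ^ 2 - Δ ^ 2 / 4 := hlam ▸ Real.sq_sqrt (by nlinarith)
  set d := dist (toPlane u)
    ((1 / 2 : ℝ) • (toPlane v + toPlane w) - (lam / Δ) • perp (toPlane v - toPlane w)) with hd
  have hd_sq : a + 2 * lam * b / Δ = d ^ 2 - r ^ 2 := by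
    rw [hd, dist_eq_norm, norm_sub_half_smul_add_sub_smul_sq _ _ _ _ _ (inner_perp_right _),
      norm_perp, ← dist_eq_norm (toPlane v), ← hΔ, ← ha, ← hb]
    rw [div_pow, div_mul_cancel₀ _ (pow_ne_zero 2 hΔpos.ne'), hlam_sq]
    ring
  rw [hd_sq, sub_add_cancel, Real.sqrt_sq dist_nonneg]
  exact abs_sub_eq_abs_sq_sub_div dist_nonneg hr0

/-- Explicit formula for the distance from an integer point `u` to a radius-`r`
circle through integer points `v` and `w`. -/
theorem stmt_1 (r : ℤ) (hr : 1 ≤ r) (u v w : ℤ × ℤ)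
    (huv : u ≠ v) (huw : u ≠ w) (hvw : v ≠ w)
    (Δ lam a b : ℝ)
    (hΔ : Δ = dist (toPlane v) (toPlane w))
    (hΔ2r : Δ ≤ 2 * r)
    (hlam : lam = Real.sqrt ((r : ℝ) ^ 2 - Δ ^ 2 / 4))
    (ha : a = inner ℝ (toPlane u - toPlane v) (toPlane u - toPlane w))
    (hb : b = inner ℝ (toPlane u - toPlane v) (perp (toPlane v - toPlane w))) :
    |dist (toPlane u)
        ((1 / 2 : ℝ) • (toPlane v + toPlane w) - (lam / Δ) • perp (toPlane v - toPlane w)) - r|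
      = |a + 2 * lam * b / Δ| / (Real.sqrt (a + 2 * lam * b / Δ + (r : ℝ) ^ 2) + r) :=
  stmt_1_general r hr u v w hvw Δ lam a b hΔ hΔ2r hlam ha hb
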